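/- arXiv:2006.13409 — 2 statements merged into one kernel-verified Lean document; each statement's English description precedes it below -/
import Mathlib

section
/- For each fixed k, the coefficients p_{k,s}^{(d)} in the expansion Q_k^{(d)}(x) = Σ_{s=0}^k p_{k,s}^{(d)} x^s of the k-th Gegenbauer polynomial (normalized so Q_k^{(d)}(d) = 1, orthogonal with respect to the distribution of √d⟨x,e_1⟩ for x uniform on the sphere of radius √d in R^d) satisfy p_{k,s}^{(d)} = O(d^{-k/2 - s/2}) as d → ∞. -/
open MeasureTheory Polynomial Filter

/-- `Q : ℕ → Polynomial ℝ` is the family of Gegenbauer polynomials in dimension `d`: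
`Q k` has degree `k`, is normalized by `Q k (d) = 1`, and the family is orthogonal with
respect to the law of `√d⟨x,e₁⟩` for `x` uniform on the sphere of radius `√d` in `ℝ^d`,
which has density proportional to `(1 - x²/d²)^((d-3)/2)` on `[-d, d]`. -/
def IsGegenbauerFamily (d : ℕ) (Q : ℕ → Polynomial ℝ) : Prop :=
  (∀ k, (Q k).degree = k) ∧
  (∀ k, (Q k).eval (d : ℝ) = 1) ∧
  (∀ j k, j ≠ k →
    ∫ x in Set.Icc (-(d : ℝ)) (d : ℝ),
      (Q j).eval x * (Q k).eval x * (1 - x ^ 2 / (d : ℝ) ^ 2) ^ (((d : ℝ) - 3) / 2) = 0)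

/-!
Write `Q_k(x) = ∑ₜ p_{k,t} xᵗ` and rescale `q_t = p_{k,t} √d^{k+t}`. Orthogonality of `Q_k` to
`xᵐ` for `m < k` together with `Q_k(d) = 1` is a `(k+1) × (k+1)` linear system for `q`, whose
entries are the moments `ν(n)` of `⟨x, e₁⟩` (for `x` uniform on `S^{d-1}(√d)`) and powers of
`d^{-1/2}`. Integrating by parts, `(d + n) ν(n+2) = (n+1) d ν(n)`, so the moments converge to
the Gaussian moments. The limiting system has determinant the Gaussian Hankel determinant
`∏ i!` (Hermite polynomials triangularise it), so `q` converges and in particular stays bounded.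
-/

open Topology Matrix intervalIntegral
open scoped Nat

noncomputable section

theorem Matrix.tendsto_of_mulVec_eq {α n 𝕜 : Type*} [Fintype n] [DecidableEq n] [Field 𝕜]
    [TopologicalSpace 𝕜] [T1Space 𝕜] [IsTopologicalRing 𝕜] [ContinuousInv₀ 𝕜] {l : Filter α}
    {A : α → Matrix n n 𝕜} {A₀ : Matrix n n 𝕜} {v : α → n → 𝕜} {b : n → 𝕜}
    (hA : Tendsto A l (𝓝 A₀)) (hA₀ : A₀.det ≠ 0) (hv : ∀ᶠ x in l, A x *ᵥ v x = b) :
    Tendsto v l (𝓝 (A₀⁻¹ *ᵥ b)) := by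
  have hinv : ContinuousAt Inv.inv A₀ :=
    continuousAt_matrix_inv A₀ (by simpa only [Ring.inverse_eq_inv'] using continuousAt_inv₀ hA₀)
  have hdet : ∀ᶠ x in l, (A x).det ≠ 0 :=
    ((continuous_id.matrix_det.tendsto A₀).comp hA).eventually_ne hA₀
  refine (((continuous_id.matrix_mulVec continuous_const).tendsto _).comp
    (hinv.tendsto.comp hA)).congr' ?_
  filter_upwards [hv, hdet] with x hx hx₀
  simp only [Function.comp_apply, id]
  rw [← hx, mulVec_mulVec, nonsing_inv_mul _ (isUnit_iff_ne_zero.2 hx₀), one_mulVec]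

section MomentFunctional

variable {R : Type*} [CommSemiring R]

def momentFunctional (m : ℕ → R) : R[X] →ₗ[R] R :=
  lsum fun n => m n • LinearMap.id

theorem momentFunctional_monomial (m : ℕ → R) (n : ℕ) (a : R) :
    momentFunctional m (monomial n a) = a * m n := by
  simp [momentFunctional, mul_comm]

theorem momentFunctional_eq_sum_range (m : ℕ → R) {p : R[X]} {N : ℕ} (hp : p.natDegree < N) :
    momentFunctional m p = ∑ t ∈ Finset.range N, p.coeff t * m t := by
  simp only [momentFunctional, lsum_apply]
  rw [sum_over_range' _ (fun _ => by simp) N hp]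
  simp [mul_comm]

theorem momentFunctional_X_pow_mul (m : ℕ → R) (i : ℕ) {p : R[X]} {N : ℕ}
    (hp : p.natDegree < N) :
    momentFunctional m (X ^ i * p) = ∑ t ∈ Finset.range N, p.coeff t * m (i + t) := by
  conv_lhs => rw [p.as_sum_range' N hp]
  simp [Finset.mul_sum, X_pow_mul_monomial, momentFunctional_monomial, add_comm]

end MomentFunctional

section Gaussian

theorem map_mul_hermite_eq_map_iterate_derivative {R : Type*} [CommRing R] (L : R[X] →ₗ[R] R)
    (hL : ∀ p, L (X * p) = L (derivative p)) (q : R[X]) (n : ℕ) :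
    L (q * (hermite n).map (Int.castRingHom R)) = L (derivative^[n] q) := by
  induction n generalizing q with
  | zero => simp
  | succ n ih =>
    set He := (hermite n).map (Int.castRingHom R)
    have h : q * (hermite (n + 1)).map (Int.castRingHom R) = X * (q * He) - q * derivative He := by
      rw [hermite_succ, Polynomial.map_sub, Polynomial.map_mul, map_X, derivative_map]
      ring
    rw [h, map_sub, hL, derivative_mul, map_add, add_sub_cancel_right, ih,
      Function.iterate_succ_apply]

def gaussianMoment : ℕ → ℝ
  | 0 => 1
  | 1 => 0
  | n + 2 => (n + 1) * gaussianMoment n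

theorem gaussianMoment_succ (n : ℕ) : gaussianMoment (n + 1) = n * gaussianMoment (n - 1) := by
  cases n <;> simp [gaussianMoment]

/-- Stein's identity `𝔼[X p(X)] = 𝔼[p'(X)]` for `X ~ 𝒩(0, 1)`. -/
theorem momentFunctional_gaussianMoment_X_mul (p : ℝ[X]) :
    momentFunctional gaussianMoment (X * p) = momentFunctional gaussianMoment (derivative p) := by
  induction p using Polynomial.induction_on' with
  | add p q hp hq => simp only [mul_add, map_add, hp, hq]
  | monomial n a =>
    rw [X_mul_monomial, derivative_monomial, momentFunctional_monomial, momentFunctional_monomial,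
      gaussianMoment_succ]
    ring

theorem det_hankel_gaussianMoment (k : ℕ) :
    (of fun i j : Fin k => gaussianMoment (i + j)).det = ∏ i : Fin k, (i ! : ℝ) := by
  -- With `B` the unitriangular matrix of Hermite coefficients, `(H Bᵀ) i n = L (Xⁱ Heₙ)
  -- = L (∂ⁿ Xⁱ)`, so `H Bᵀ` is lower triangular with diagonal `n!`.
  set H : Matrix (Fin k) (Fin k) ℝ := of fun i j => gaussianMoment (i + j)
  set He : ℕ → ℝ[X] := fun n => (hermite n).map (Int.castRingHom ℝ)
  set B : Matrix (Fin k) (Fin k) ℝ := of fun n j => (He n).coeff j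
  have hB : Bᵀ.det = 1 := by
    rw [det_of_isUpperTriangular fun i j hji => by
      simp [B, He, coeff_hermite_of_lt (show (j : ℕ) < i from hji)]]
    simp [B, He, coeff_hermite_self]
  have hHB : ∀ i n : Fin k,
      (H * Bᵀ) i n = ((i : ℕ).descFactorial n : ℝ) * gaussianMoment (i - n) := by
    intro i n
    have h := map_mul_hermite_eq_map_iterate_derivative (momentFunctional gaussianMoment)
      momentFunctional_gaussianMoment_X_mul (X ^ (i : ℕ)) n
    rw [momentFunctional_X_pow_mul _ _ (N := k) (by simp [(hermite_monic _).natDegree_map]),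
      iterate_derivative_X_pow_eq_C_mul, C_mul_X_pow_eq_monomial, momentFunctional_monomial] at h
    rw [← h, ← Fin.sum_univ_eq_sum_range]
    simp only [H, B, He, mul_apply, transpose_apply, of_apply, mul_comm]
  rw [← mul_one H.det, ← hB, ← det_mul, det_of_isLowerTriangular _ fun i n hin => ?_]
  · simp [hHB, gaussianMoment, Nat.descFactorial_self]
  · simp [hHB, Nat.descFactorial_eq_zero_iff_lt.2 (show (i : ℕ) < n from hin)]

end Gaussian

section GegenbauerWeight

variable {D β : ℝ}

def gegenbauerWeight (D β x : ℝ) : ℝ := (1 - x ^ 2 / D ^ 2) ^ β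

def gegenbauerMoment (D β : ℝ) (n : ℕ) : ℝ := ∫ x in -D..D, x ^ n * gegenbauerWeight D β x

theorem continuous_gegenbauerWeight (hβ : 0 ≤ β) : Continuous (gegenbauerWeight D β) :=
  (by fun_prop : Continuous fun x : ℝ => 1 - x ^ 2 / D ^ 2).rpow_const fun _ => Or.inr hβ

theorem one_sub_sq_div_sq_nonneg_of_mem_uIcc {x : ℝ} (hx : x ∈ Set.uIcc (-D) D) :
    0 ≤ 1 - x ^ 2 / D ^ 2 := by
  have : x ^ 2 ≤ D ^ 2 := by rcases Set.mem_uIcc.1 hx with ⟨h1, h2⟩ | ⟨h1, h2⟩ <;> nlinarith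
  exact sub_nonneg.2 (div_le_one_of_le₀ this (sq_nonneg D))

theorem gegenbauerMoment_of_odd {n : ℕ} (hn : Odd n) : gegenbauerMoment D β n = 0 := by
  have hw : ∀ x, gegenbauerWeight D β (-x) = gegenbauerWeight D β x := by simp [gegenbauerWeight]
  have h := integral_comp_neg (a := -D) (b := D) fun x => x ^ n * gegenbauerWeight D β x
  simp only [neg_neg, hn.neg_pow, hw, neg_mul, intervalIntegral.integral_neg] at h
  rw [gegenbauerMoment]
  linarith

theorem gegenbauerMoment_zero_pos (hD : 0 < D) (hβ : 0 ≤ β) : 0 < gegenbauerMoment D β 0 := by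
  refine intervalIntegral_pos_of_pos_on ?_ (fun x hx => ?_) (by linarith)
  · simpa using (continuous_gegenbauerWeight hβ).intervalIntegrable (μ := volume) (-D) D
  · have : x ^ 2 / D ^ 2 < 1 := (div_lt_one (by positivity)).2 (sq_lt_sq' hx.1 hx.2)
    simpa [gegenbauerWeight] using Real.rpow_pos_of_pos (by linarith) β

/-- Integration by parts against `(1 - x²/D²)^(β+1)`, which vanishes at `±D`. -/
theorem gegenbauerMoment_add_two (hD : 0 < D) (hβ : 0 ≤ β) (n : ℕ) :
    (n + 2 * β + 3) * gegenbauerMoment D β (n + 2) = (n + 1) * D ^ 2 * gegenbauerMoment D β n := by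
  set w := gegenbauerWeight D β
  have hw : Continuous w := continuous_gegenbauerWeight hβ
  have hint : ∀ (c : ℝ) (m : ℕ), IntervalIntegrable (fun x => c * (x ^ m * w x)) volume (-D) D :=
    fun c m => (by fun_prop : Continuous fun x => c * (x ^ m * w x)).intervalIntegrable _ _
  have hderiv : ∀ x, HasDerivAt (fun x => (1 - x ^ 2 / D ^ 2) ^ (β + 1))
      ((β + 1) * w x * (-(2 * x) / D ^ 2)) x := fun x => by
    convert (((hasDerivAt_pow 2 x).div_const (D ^ 2)).const_sub 1).rpow_const
      (p := β + 1) (Or.inr (by linarith)) using 1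
    simp [w, gegenbauerWeight]
    ring
  have hibp := integral_mul_deriv_eq_deriv_mul (a := -D) (b := D)
    (u' := fun x => ((n : ℝ) + 1) * x ^ n)
    (fun x _ => by simpa using hasDerivAt_pow (n + 1) x) (fun x _ => hderiv x)
    ((by fun_prop : Continuous fun x : ℝ => ((n : ℝ) + 1) * x ^ n).intervalIntegrable _ _)
    ((by fun_prop : Continuous fun x => (β + 1) * w x * (-(2 * x) / D ^ 2)).intervalIntegrable _ _)
  have hboundary : ∀ x : ℝ, x ^ 2 = D ^ 2 → (1 - x ^ 2 / D ^ 2) ^ (β + 1) = 0 := fun x hx => by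
    rw [hx, div_self (by positivity), sub_self, Real.zero_rpow (by linarith)]
  have hlhs : ∫ x in -D..D, x ^ (n + 1) * ((β + 1) * w x * (-(2 * x) / D ^ 2))
      = -(2 * (β + 1) / D ^ 2) * gegenbauerMoment D β (n + 2) := by
    rw [gegenbauerMoment, ← intervalIntegral.integral_const_mul]
    congr 1; ext x; ring
  have hrhs : ∫ x in -D..D, ((n : ℝ) + 1) * x ^ n * (1 - x ^ 2 / D ^ 2) ^ (β + 1)
      = (n + 1) * gegenbauerMoment D β n - (n + 1) / D ^ 2 * gegenbauerMoment D β (n + 2) := by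
    rw [gegenbauerMoment, gegenbauerMoment, ← intervalIntegral.integral_const_mul,
      ← intervalIntegral.integral_const_mul, ← integral_sub (hint _ _) (hint _ _)]
    refine integral_congr fun x hx => ?_
    simp only [w, gegenbauerWeight]
    rw [Real.rpow_add_one' (one_sub_sq_div_sq_nonneg_of_mem_uIcc hx) (by linarith)]
    ring
  rw [hlhs, hrhs, hboundary D rfl, hboundary (-D) (neg_sq D)] at hibp
  field_simp at hibp
  linear_combination -hibp

theorem integral_eval_mul_gegenbauerWeight (hD : 0 ≤ D) (hβ : 0 ≤ β) (p : ℝ[X]) :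
    ∫ x in Set.Icc (-D) D, p.eval x * gegenbauerWeight D β x
      = momentFunctional (gegenbauerMoment D β) p := by
  rw [momentFunctional_eq_sum_range _ p.natDegree.lt_succ_self, integral_Icc_eq_integral_Ioc,
    ← intervalIntegral.integral_of_le (by linarith)]
  simp_rw [eval_eq_sum_range, Finset.sum_mul]
  rw [intervalIntegral.integral_finsetSum
    (f := fun t x => p.coeff t * x ^ t * gegenbauerWeight D β x)
    fun t _ => ((continuous_const.mul (continuous_pow t)).mul
      (continuous_gegenbauerWeight hβ)).intervalIntegrable _ _]
  refine Finset.sum_congr rfl fun t _ => ?_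
  rw [gegenbauerMoment, ← intervalIntegral.integral_const_mul]
  congr 1; ext x; ring

end GegenbauerWeight

section ScaledMoments

variable {d : ℕ}

theorem gegenbauerMoment_natCast_zero_pos (hd : 3 ≤ d) :
    0 < gegenbauerMoment d (((d : ℝ) - 3) / 2) 0 := by
  have hd' : (3 : ℝ) ≤ d := by exact_mod_cast hd
  exact gegenbauerMoment_zero_pos (by linarith) (by linarith)

/-- The `n`-th moment of `⟨x, e₁⟩` for `x` uniform on the sphere of radius `√d` in `ℝᵈ`. -/
def scaledMoment (d n : ℕ) : ℝ :=
  gegenbauerMoment d (((d : ℝ) - 3) / 2) n / (gegenbauerMoment d (((d : ℝ) - 3) / 2) 0 * √d ^ n)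

theorem scaledMoment_add_two (hd : 3 ≤ d) (n : ℕ) :
    scaledMoment d (n + 2) = (n + 1) * (d / (d + n)) * scaledMoment d n := by
  have hd' : (3 : ℝ) ≤ d := by exact_mod_cast hd
  have hrec := gegenbauerMoment_add_two (D := d) (β := ((d : ℝ) - 3) / 2) (by linarith)
    (by linarith) n
  rw [show (n : ℝ) + 2 * (((d : ℝ) - 3) / 2) + 3 = d + n by ring] at hrec
  have hM₀ := gegenbauerMoment_natCast_zero_pos hd
  have hsqrt : (0 : ℝ) < √d := by positivity
  rw [scaledMoment, scaledMoment, pow_add, Real.sq_sqrt (by linarith)]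
  field_simp
  linear_combination hrec

theorem tendsto_scaledMoment :
    ∀ n, Tendsto (fun d => scaledMoment d n) atTop (𝓝 (gaussianMoment n))
  | 0 => tendsto_const_nhds.congr' <| (eventually_ge_atTop 3).mono fun d hd => by
      simp [scaledMoment, gaussianMoment, (gegenbauerMoment_natCast_zero_pos hd).ne']
  | 1 => by simp [scaledMoment, gegenbauerMoment_of_odd odd_one, gaussianMoment]
  | n + 2 => by
    have h := (tendsto_const_nhds (x := (n : ℝ) + 1)).mul
      ((tendsto_natCast_div_add_atTop (n : ℝ)).mul (tendsto_scaledMoment n))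
    rw [one_mul] at h
    exact h.congr' <| (eventually_ge_atTop 3).mono fun d hd =>
      ((scaledMoment_add_two hd n).trans (mul_assoc _ _ _)).symm

end ScaledMoments

/-- Rows `m < k` encode `∫ xᵐ Q_k = 0` and the last row `Q_k(d) = 1`, both in terms of the
rescaled coefficients `p_{k,t} √d^{k+t}`. -/
def gegenbauerSystem (k d : ℕ) : Matrix (Fin (k + 1)) (Fin (k + 1)) ℝ :=
  updateRow (of fun m t : Fin (k + 1) => scaledMoment d (m + t)) (Fin.last k)
    fun t => (√d)⁻¹ ^ (k - t)

def gaussianSystem (k : ℕ) : Matrix (Fin (k + 1)) (Fin (k + 1)) ℝ :=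
  updateRow (of fun m t : Fin (k + 1) => gaussianMoment (m + t)) (Fin.last k)
    (Pi.single (Fin.last k) 1)

theorem tendsto_gegenbauerSystem (k : ℕ) :
    Tendsto (gegenbauerSystem k) atTop (𝓝 (gaussianSystem k)) := by
  have hmoments : Tendsto (fun d => of fun m t : Fin (k + 1) => scaledMoment d (m + t)) atTop
      (𝓝 (of fun m t : Fin (k + 1) => gaussianMoment (m + t))) :=
    tendsto_pi_nhds.2 fun m => tendsto_pi_nhds.2 fun t => tendsto_scaledMoment _
  have hlast : Tendsto (fun (d : ℕ) (t : Fin (k + 1)) => (√(d : ℝ))⁻¹ ^ (k - t)) atTop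
      (𝓝 (Pi.single (Fin.last k) 1)) := by
    refine tendsto_pi_nhds.2 fun t => ?_
    have h0 : Tendsto (fun d : ℕ => (√(d : ℝ))⁻¹) atTop (𝓝 0) :=
      tendsto_inv_atTop_zero.comp (Real.tendsto_sqrt_atTop.comp tendsto_natCast_atTop_atTop)
    convert h0.pow (k - t) using 2
    rcases eq_or_ne t (Fin.last k) with rfl | ht
    · simp
    · rw [Pi.single_eq_of_ne ht, zero_pow]
      have := Fin.val_lt_last ht
      omega
  exact ((continuous_fst.matrix_updateRow (Fin.last k) continuous_snd).tendsto _).comp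
    (hmoments.prodMk_nhds hlast)

theorem det_gaussianSystem (k : ℕ) : (gaussianSystem k).det = ∏ i : Fin k, (i ! : ℝ) := by
  rw [gaussianSystem, ← adjugate_apply, adjugate_fin_succ_eq_det_submatrix,
    ← det_hankel_gaussianMoment]
  simp [Fin.succAbove_last]
  rfl

section GegenbauerFamily

variable {d : ℕ} {Q : ℕ → ℝ[X]}

theorem IsGegenbauerFamily.natDegree_eq (hQ : IsGegenbauerFamily d Q) (k : ℕ) :
    (Q k).natDegree = k :=
  natDegree_eq_of_degree_eq_some (hQ.1 k)

theorem IsGegenbauerFamily.momentFunctional_mul_eq_zero (hd : 3 ≤ d)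
    (hQ : IsGegenbauerFamily d Q) {j k : ℕ} (hjk : j ≠ k) :
    momentFunctional (gegenbauerMoment d (((d : ℝ) - 3) / 2)) (Q j * Q k) = 0 := by
  have hd' : (3 : ℝ) ≤ d := by exact_mod_cast hd
  rw [← integral_eval_mul_gegenbauerWeight (by linarith) (by linarith), ← hQ.2.2 j k hjk]
  simp [gegenbauerWeight]

theorem IsGegenbauerFamily.momentFunctional_mul_eq_zero_of_degree_lt (hd : 3 ≤ d)
    (hQ : IsGegenbauerFamily d Q) {k : ℕ} {p : ℝ[X]} (hp : p.degree < k) :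
    momentFunctional (gegenbauerMoment d (((d : ℝ) - 3) / 2)) (p * Q k) = 0 := by
  let S : Polynomial.Sequence ℝ := ⟨Q, hQ.1⟩
  have hspan := S.span_degreeLT (m := k) fun i _ => (leadingCoeff_ne_zero.2 (S.ne_zero i)).isUnit
  have hker : Submodule.span ℝ (S '' Set.Iio k) ≤ LinearMap.ker
      ((momentFunctional (gegenbauerMoment d (((d : ℝ) - 3) / 2))).comp
        (LinearMap.mulRight ℝ (Q k))) :=
    Submodule.span_le.2 <| by
      rintro _ ⟨j, hj, rfl⟩
      exact hQ.momentFunctional_mul_eq_zero hd (Nat.ne_of_lt hj)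
  exact hker (hspan ▸ mem_degreeLT.2 hp)

theorem IsGegenbauerFamily.sum_coeff_mul_gegenbauerMoment (hd : 3 ≤ d)
    (hQ : IsGegenbauerFamily d Q) {m k : ℕ} (hm : m < k) :
    ∑ t ∈ Finset.range (k + 1), (Q k).coeff t * gegenbauerMoment d (((d : ℝ) - 3) / 2) (m + t)
      = 0 := by
  rw [← momentFunctional_X_pow_mul _ m (by rw [hQ.natDegree_eq]; omega)]
  exact hQ.momentFunctional_mul_eq_zero_of_degree_lt hd (by rw [degree_X_pow]; exact_mod_cast hm)

theorem IsGegenbauerFamily.sum_coeff_mul_pow (hQ : IsGegenbauerFamily d Q) (k : ℕ) :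
    ∑ t ∈ Finset.range (k + 1), (Q k).coeff t * (d : ℝ) ^ t = 1 := by
  rw [← hQ.2.1 k, eval_eq_sum_range, hQ.natDegree_eq]

theorem IsGegenbauerFamily.gegenbauerSystem_mulVec (hd : 3 ≤ d) (hQ : IsGegenbauerFamily d Q)
    (k : ℕ) :
    gegenbauerSystem k d *ᵥ (fun t : Fin (k + 1) => (Q k).coeff t * √d ^ (k + t))
      = Pi.single (Fin.last k) 1 := by
  have hd' : (3 : ℝ) ≤ d := by exact_mod_cast hd
  have hsqrt : 0 < √(d : ℝ) := Real.sqrt_pos.2 (by linarith)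
  have hM₀ := gegenbauerMoment_natCast_zero_pos hd
  ext m
  induction m using Fin.lastCases with
  | last =>
    have hterm : ∀ t : Fin (k + 1), (√d)⁻¹ ^ (k - t) * ((Q k).coeff t * √d ^ (k + t))
        = (Q k).coeff t * (d : ℝ) ^ (t : ℕ) := fun t => by
      rw [show k + t = (k - t) + 2 * t by omega, pow_add, pow_mul, Real.sq_sqrt (by linarith),
        inv_pow]
      field_simp
    rw [gegenbauerSystem, mulVec, dotProduct, updateRow_self, Pi.single_eq_same,
      Finset.sum_congr rfl fun t _ => hterm t,
      Fin.sum_univ_eq_sum_range (fun t => (Q k).coeff t * (d : ℝ) ^ t), hQ.sum_coeff_mul_pow]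
  | cast m =>
    have hterm : ∀ t : Fin (k + 1), scaledMoment d (m + t) * ((Q k).coeff t * √d ^ (k + t))
        = (Q k).coeff t * gegenbauerMoment d (((d : ℝ) - 3) / 2) (m + t)
          * (√d ^ (k - m) / gegenbauerMoment d (((d : ℝ) - 3) / 2) 0) := fun t => by
      rw [scaledMoment, show k + (t : ℕ) = (m + t) + (k - m) by omega]
      field_simp
      ring
    rw [gegenbauerSystem, mulVec, dotProduct, updateRow_ne (Fin.castSucc_lt_last m).ne,
      Pi.single_eq_of_ne (Fin.castSucc_lt_last m).ne]
    simp only [of_apply, Fin.val_castSucc]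
    rw [Finset.sum_congr rfl fun t _ => hterm t, ← Finset.sum_mul,
      Fin.sum_univ_eq_sum_range
        (fun t => (Q k).coeff t * gegenbauerMoment d (((d : ℝ) - 3) / 2) (m + t)),
      hQ.sum_coeff_mul_gegenbauerMoment hd m.isLt, zero_mul]

end GegenbauerFamily

theorem Real.sqrt_pow_mul_rpow_neg_div_two {x : ℝ} (hx : 0 < x) (n : ℕ) :
    √x ^ n * x ^ (-(n : ℝ) / 2) = 1 := by
  rw [Real.sqrt_eq_rpow, ← Real.rpow_natCast, ← Real.rpow_mul hx.le, ← Real.rpow_add hx]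
  ring_nf
  exact Real.rpow_zero x

end

/-- For each fixed `k` and `s`, the coefficient `p_{k,s}^{(d)}` of `x^s` in the `k`-th
Gegenbauer polynomial `Q_k^{(d)}` satisfies `p_{k,s}^{(d)} = O(d^{-k/2 - s/2})` as `d → ∞`. -/
theorem gegenbauer_coeff_isBigO
    (Q : (d : ℕ) → ℕ → Polynomial ℝ)
    (hQ : ∀ d, 3 ≤ d → IsGegenbauerFamily d (Q d))
    (k s : ℕ) :
    (fun d : ℕ => (Q d k).coeff s) =O[atTop]
      (fun d : ℕ => (d : ℝ) ^ (-(k : ℝ) / 2 - (s : ℝ) / 2)) := by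
  obtain hsk | hks := le_or_gt s k
  · have hlim := Matrix.tendsto_of_mulVec_eq (tendsto_gegenbauerSystem k)
      (by simp [det_gaussianSystem, Finset.prod_ne_zero_iff, Nat.factorial_ne_zero])
      ((eventually_ge_atTop 3).mono fun d hd => (hQ d hd).gegenbauerSystem_mulVec hd k)
    have hscaled := ((tendsto_pi_nhds.1 hlim ⟨s, by omega⟩).isBigO_one ℝ).mul
      (Asymptotics.isBigO_refl (fun d : ℕ => (d : ℝ) ^ (-(k : ℝ) / 2 - (s : ℝ) / 2)) atTop)
    refine hscaled.congr' ?_ (by simp)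
    filter_upwards [eventually_gt_atTop 0] with d hd
    rw [mul_assoc, show -(k : ℝ) / 2 - s / 2 = -((k + s : ℕ) : ℝ) / 2 by push_cast; ring,
      Real.sqrt_pow_mul_rpow_neg_div_two (by exact_mod_cast hd), mul_one]
  · refine (Asymptotics.isBigO_zero _ _).congr' ?_ EventuallyEq.rfl
    filter_upwards [eventually_ge_atTop 3] with d hd
    exact (coeff_eq_zero_of_natDegree_lt (by rwa [(hQ d hd).natDegree_eq])).symm
end

section
/- Let D be an invertible symmetric Q×Q block matrix (blocks D^{qq'} of sizes m_q × m_{q'}) such that each diagonal block satisfies 0 < c_q·s_q ≤ λ_min(D^{qq}) ≤ λ_max(D^{qq}) ≤ C_q·s_q for scalars s_q > 0, and each off-diagonal block satisfies σ_max(D^{qq'}) ≤ δ·√(s_q·s_{q'}) for sufficiently small δ. Then the inverse B = D^{-1} satisfies ||B^{qq}||_op = O(1/s_q) and ||B^{qq'}||_op = O(δ/√(s_q s_{q'})) for q ≠ q', with constants depending only on Q, c_q, C_q. -/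
/-- The `ℓ²→ℓ²` operator norm of a real matrix (largest singular value). -/
noncomputable def matOpNorm {m n : Type*} [Fintype m] [Fintype n] [DecidableEq n]
    (M : Matrix m n ℝ) : ℝ :=
  ‖LinearMap.toContinuousLinearMap (Matrix.toEuclideanLin M)‖

/-- The `(q,q')` block of a `Q×Q` block matrix. -/
def blk {Qn : ℕ} {m : Fin Qn → ℕ}
    (M : Matrix ((q : Fin Qn) × Fin (m q)) ((q : Fin Qn) × Fin (m q)) ℝ)
    (q q' : Fin Qn) : Matrix (Fin (m q)) (Fin (m q')) ℝ :=
  fun i j => M ⟨q, i⟩ ⟨q', j⟩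

/-!
Let `c = min_q c_q`. Scaling block `q` by `√s_q` turns the hypotheses into `D^{qq} ≥ c` and
`‖D^{qq'}‖ ≤ δ`. For `δ Q ≤ c / 2` the off-diagonal part of the quadratic form is absorbed by
Cauchy–Schwarz, so `⟪v, D v⟫ ≥ Σ_q (c / 2) s_q ‖v_q‖²`. Solving `D v = e_{q'} y` and testing
this against `v` bounds every block of `D⁻¹` by `2 / (c √(s_q s_{q'}))`. For `q ≠ q'` the `q`-th
row of the same system reads `D^{qq} v_q = -Σ_{r ≠ q} D^{qr} v_r`; coercivity of `D^{qq}` and the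
a priori bounds on the `v_r` give the extra factor `δ`.
-/

open Finset Matrix
open scoped RealInnerProductSpace

lemma mul_le_of_mul_sq_le_mul {a b t : ℝ} (ht : 0 ≤ t) (hb : 0 ≤ b) (h : a * t ^ 2 ≤ t * b) :
    a * t ≤ b := by
  rcases ht.eq_or_lt with rfl | ht
  · simpa using hb
  · exact le_of_mul_le_mul_left (by linear_combination h) ht

lemma mul_norm_le_norm_of_mul_norm_sq_le_inner {F : Type*} [NormedAddCommGroup F]
    [InnerProductSpace ℝ F] {a : ℝ} {x y : F} (h : a * ‖x‖ ^ 2 ≤ ⟪x, y⟫) : a * ‖x‖ ≤ ‖y‖ :=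
  mul_le_of_mul_sq_le_mul (norm_nonneg x) (norm_nonneg y) (h.trans (real_inner_le_norm x y))

lemma ContinuousLinearMap.opNorm_le_div_of_mul_norm_apply_le {E F : Type*} [NormedAddCommGroup E]
    [NormedAddCommGroup F] [NormedSpace ℝ E] [NormedSpace ℝ F] (A : E →L[ℝ] F) {a b : ℝ}
    (ha : 0 < a) (hb : 0 ≤ b) (h : ∀ y, a * ‖A y‖ ≤ b * ‖y‖) : ‖A‖ ≤ b / a :=
  A.opNorm_le_bound (div_nonneg hb ha.le) fun y => by
    rw [div_mul_eq_mul_div, le_div_iff₀ ha, mul_comm]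
    exact h y

section BlockOperator

variable {ι : Type*} [Fintype ι] {E : ι → Type*}
  [∀ i, NormedAddCommGroup (E i)] [∀ i, InnerProductSpace ℝ (E i)]
  (T : ∀ i j, E j →L[ℝ] E i) {c δ : ℝ} {w : ι → ℝ}

theorem mul_mul_norm_le_of_sum_le_inner {κ : ℝ} (hκ : 0 ≤ κ) {x : ∀ i, E i} {j : ι} {y : E j}
    (h : ∑ i, κ * w i ^ 2 * ‖x i‖ ^ 2 ≤ ⟪x j, y⟫) (i : ι) : κ * (w i * w j) * ‖x i‖ ≤ ‖y‖ := by
  have hterm : ∀ k, κ * w k ^ 2 * ‖x k‖ ^ 2 ≤ ‖x j‖ * ‖y‖ := fun k =>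
    (single_le_sum (fun l _ => by positivity) (mem_univ k)).trans (h.trans (real_inner_le_norm _ _))
  have hj : κ * w j ^ 2 * ‖x j‖ ≤ ‖y‖ :=
    mul_le_of_mul_sq_le_mul (norm_nonneg _) (norm_nonneg _) (hterm j)
  have hsq : (κ * (w i * w j) * ‖x i‖) ^ 2 ≤ ‖y‖ ^ 2 :=
    calc (κ * (w i * w j) * ‖x i‖) ^ 2 = κ * w i ^ 2 * ‖x i‖ ^ 2 * (κ * w j ^ 2) := by ring
      _ ≤ ‖x j‖ * ‖y‖ * (κ * w j ^ 2) := mul_le_mul_of_nonneg_right (hterm i) (by positivity)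
      _ = κ * w j ^ 2 * ‖x j‖ * ‖y‖ := by ring
      _ ≤ ‖y‖ * ‖y‖ := mul_le_mul_of_nonneg_right hj (norm_nonneg _)
      _ = ‖y‖ ^ 2 := (sq _).symm
  exact (abs_le_of_sq_le_sq' hsq (norm_nonneg _)).2

variable [DecidableEq ι]

theorem sum_mul_norm_sq_le_sum_inner_sum_apply (hδ : 0 ≤ δ)
    (hdiag : ∀ i (z : E i), c * w i ^ 2 * ‖z‖ ^ 2 ≤ ⟪z, T i i z⟫)
    (hoff : ∀ i j, i ≠ j → ‖T i j‖ ≤ δ * (w i * w j)) (x : ∀ i, E i) :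
    ∑ i, (c - δ * Fintype.card ι) * w i ^ 2 * ‖x i‖ ^ 2 ≤ ∑ i, ⟪x i, ∑ j, T i j (x j)⟫ := by
  set p : ι → ℝ := fun i => w i * ‖x i‖
  have hentry : ∀ i j, (if i = j then c * w i ^ 2 * ‖x i‖ ^ 2 else 0) - δ * (p i * p j)
      ≤ ⟪x i, T i j (x j)⟫ := by
    intro i j
    split_ifs with hij
    · subst hij
      linarith [hdiag i (x i), mul_nonneg hδ (mul_self_nonneg (p i))]
    · calc 0 - δ * (p i * p j) ≤ -(‖x i‖ * (‖T i j‖ * ‖x j‖)) := by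
            have := mul_le_mul_of_nonneg_right (hoff i j hij) (norm_nonneg (x j))
            have := mul_le_mul_of_nonneg_left this (norm_nonneg (x i))
            linarith
        _ ≤ -(‖x i‖ * ‖T i j (x j)‖) := by gcongr; exact (T i j).le_opNorm (x j)
        _ ≤ ⟪x i, T i j (x j)⟫ := neg_le_of_abs_le (abs_real_inner_le_norm _ _)
  have hcard : (∑ i, p i) ^ 2 ≤ Fintype.card ι * ∑ i, w i ^ 2 * ‖x i‖ ^ 2 := by
    simpa [p, mul_pow] using sq_sum_le_card_mul_sum_sq (s := univ) (f := p)
  calc ∑ i, (c - δ * Fintype.card ι) * w i ^ 2 * ‖x i‖ ^ 2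
      ≤ ∑ i, c * w i ^ 2 * ‖x i‖ ^ 2 - δ * (∑ i, p i) ^ 2 := by
        have hsplit : ∑ i, (c - δ * Fintype.card ι) * w i ^ 2 * ‖x i‖ ^ 2
            = ∑ i, c * w i ^ 2 * ‖x i‖ ^ 2 - δ * (Fintype.card ι * ∑ i, w i ^ 2 * ‖x i‖ ^ 2) := by
          rw [mul_sum, mul_sum, ← sum_sub_distrib]
          exact sum_congr rfl fun i _ => by ring
        linarith [mul_le_mul_of_nonneg_left hcard hδ]
    _ = ∑ i, ∑ j, ((if i = j then c * w i ^ 2 * ‖x i‖ ^ 2 else 0) - δ * (p i * p j)) := by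
        rw [sq, sum_mul_sum, mul_sum]
        simp only [sum_sub_distrib, sum_ite_eq, mem_univ, if_true, mul_sum]
    _ ≤ ∑ i, ∑ j, ⟪x i, T i j (x j)⟫ := sum_le_sum fun i _ => sum_le_sum fun j _ => hentry i j
    _ = ∑ i, ⟪x i, ∑ j, T i j (x j)⟫ := by simp only [inner_sum]


theorem mul_mul_norm_le_of_sum_apply_eq_zero (hδ : 0 ≤ δ)
    (hdiag : ∀ i (z : E i), c * w i ^ 2 * ‖z‖ ^ 2 ≤ ⟪z, T i i z⟫)
    (hoff : ∀ i j, i ≠ j → ‖T i j‖ ≤ δ * (w i * w j)) {κ b : ℝ} (hκ : 0 ≤ κ)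
    {x : ∀ i, E i} {i j : ι} (hwi : 0 < w i) (hwj : 0 ≤ w j) (hrow : ∑ r, T i r (x r) = 0)
    (hx : ∀ r, κ * (w r * w j) * ‖x r‖ ≤ b) :
    c * κ * (w i * w j) * ‖x i‖ ≤ Fintype.card ι * δ * b := by
  have hb : 0 ≤ b := (by positivity : 0 ≤ κ * (w i * w j) * ‖x i‖).trans (hx i)
  have hTii : T i i (x i) = -∑ r ∈ univ.erase i, T i r (x r) := by
    rw [← add_sum_erase _ _ (mem_univ i)] at hrow
    exact eq_neg_of_add_eq_zero_left hrow
  have hterm : ∀ r ∈ univ.erase i, ‖T i r (x r)‖ * (κ * w j) ≤ δ * w i * b := fun r hr =>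
    calc ‖T i r (x r)‖ * (κ * w j) ≤ δ * (w i * w r) * ‖x r‖ * (κ * w j) := by
          gcongr
          exact (T i r).le_of_opNorm_le (hoff i r (ne_of_mem_erase hr).symm) (x r)
      _ = δ * w i * (κ * (w r * w j) * ‖x r‖) := by ring
      _ ≤ δ * w i * b := by gcongr; exact hx r
  have hup : ‖T i i (x i)‖ * (κ * w j) ≤ Fintype.card ι * (δ * w i * b) :=
    calc ‖T i i (x i)‖ * (κ * w j) ≤ ∑ r ∈ univ.erase i, ‖T i r (x r)‖ * (κ * w j) := by
          rw [hTii, norm_neg, ← sum_mul]; gcongr; exact norm_sum_le _ _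
      _ ≤ ∑ r ∈ univ.erase i, δ * w i * b := sum_le_sum hterm
      _ ≤ Fintype.card ι * (δ * w i * b) := by
          rw [sum_const, nsmul_eq_mul]; gcongr
          exact_mod_cast (card_erase_le).trans (card_univ).le
  have hlow := mul_norm_le_norm_of_mul_norm_sq_le_inner (hdiag i (x i))
  have hlow' := mul_le_mul_of_nonneg_right hlow (by positivity : 0 ≤ κ * w j)
  refine le_of_mul_le_mul_right ?_ hwi
  linear_combination hlow'.trans hup

theorem norm_le_of_sum_apply_eq_single (hw : ∀ i, 0 < w i) (hδ : 0 ≤ δ)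
    (hsmall : δ * Fintype.card ι ≤ c / 2)
    (hdiag : ∀ i (z : E i), c * w i ^ 2 * ‖z‖ ^ 2 ≤ ⟪z, T i i z⟫)
    (hoff : ∀ i j, i ≠ j → ‖T i j‖ ≤ δ * (w i * w j)) {x : ∀ i, E i} {j : ι} {y : E j}
    (hx : ∀ i, ∑ r, T i r (x r) = Pi.single j y i) :
    (∀ i, c / 2 * (w i * w j) * ‖x i‖ ≤ ‖y‖) ∧
      ∀ i, i ≠ j → c * (c / 2) * (w i * w j) * ‖x i‖ ≤ Fintype.card ι * δ * ‖y‖ := by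
  have hc : 0 ≤ c / 2 := (mul_nonneg hδ (Nat.cast_nonneg _)).trans hsmall
  have hsingle : ∑ i, ⟪x i, ∑ r, T i r (x r)⟫ = ⟪x j, y⟫ := by
    simp_rw [hx]
    refine (sum_eq_single j (fun i _ hij => ?_) (fun h => absurd (mem_univ j) h)).trans ?_
    · rw [Pi.single_eq_of_ne hij, inner_zero_right]
    · rw [Pi.single_eq_same]
  have hcoer : ∑ i, c / 2 * w i ^ 2 * ‖x i‖ ^ 2 ≤ ⟪x j, y⟫ := by
    refine le_trans (sum_le_sum fun i _ => ?_)
      ((sum_mul_norm_sq_le_sum_inner_sum_apply T hδ hdiag hoff x).trans_eq hsingle)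
    gcongr
    linarith
  have hbound := mul_mul_norm_le_of_sum_le_inner hc hcoer
  refine ⟨hbound, fun i hij => ?_⟩
  exact mul_mul_norm_le_of_sum_apply_eq_zero T hδ hdiag hoff hc (hw i) (hw j).le
    (by rw [hx, Pi.single_eq_of_ne hij]) hbound

end BlockOperator

section BlockMatrix

open WithLp

variable {Qn : ℕ} {m : Fin Qn → ℕ}
  (M N : Matrix ((q : Fin Qn) × Fin (m q)) ((q : Fin Qn) × Fin (m q)) ℝ)

noncomputable def blockOp (q r : Fin Qn) :
    EuclideanSpace ℝ (Fin (m r)) →L[ℝ] EuclideanSpace ℝ (Fin (m q)) :=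
  LinearMap.toContinuousLinearMap (toEuclideanLin (blk M q r))

lemma blockOp_apply (q r : Fin Qn) (y : EuclideanSpace ℝ (Fin (m r))) :
    blockOp M q r y = toLp 2 (blk M q r *ᵥ ofLp y) := rfl

lemma norm_blockOp (q r : Fin Qn) : ‖blockOp M q r‖ = matOpNorm (blk M q r) := rfl

lemma blk_mul (q q' : Fin Qn) : blk (M * N) q q' = ∑ r, blk M q r * blk N r q' := by
  ext i j
  simp only [blk, mul_apply, Matrix.sum_apply, ← univ_sigma_univ, sum_sigma]

lemma sum_blockOp_apply_blockOp_apply (q q' : Fin Qn) (y : EuclideanSpace ℝ (Fin (m q'))) :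
    ∑ r, blockOp M q r (blockOp N r q' y) = blockOp (M * N) q q' y := by
  simp only [blockOp_apply, mulVec_mulVec, ← toLp_sum, ← sum_mulVec, blk_mul]

lemma blockOp_one_apply (q q' : Fin Qn) (y : EuclideanSpace ℝ (Fin (m q'))) :
    blockOp 1 q q' y = Pi.single (M := fun r => EuclideanSpace ℝ (Fin (m r))) q' y q := by
  rcases eq_or_ne q q' with rfl | hne
  · have hblk : blk (1 : Matrix _ _ ℝ) q q = (1 : Matrix (Fin (m q)) (Fin (m q)) ℝ) := by
      ext i j
      simp [blk, one_apply]
    simp [blockOp_apply, hblk]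
  · have hblk : blk (1 : Matrix _ _ ℝ) q q' = (0 : Matrix (Fin (m q)) (Fin (m q')) ℝ) := by
      ext i j
      simp [blk, one_apply, hne]
    simp [blockOp_apply, hblk, Pi.single_eq_of_ne hne]

theorem matOpNorm_blk_inv_le {c δ : ℝ} {w : Fin Qn → ℝ} (hc : 0 < c) (hw : ∀ q, 0 < w q)
    (hδ : 0 ≤ δ) (hsmall : δ * Qn ≤ c / 2) (hM : IsUnit M.det)
    (hdiag : ∀ q (v : Fin (m q) → ℝ), c * w q ^ 2 * ∑ i, v i ^ 2 ≤ v ⬝ᵥ blk M q q *ᵥ v)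
    (hoff : ∀ q q', q ≠ q' → matOpNorm (blk M q q') ≤ δ * (w q * w q')) (q q' : Fin Qn) :
    matOpNorm (blk M⁻¹ q q') ≤ 2 / c / (w q * w q') ∧
      (q ≠ q' → matOpNorm (blk M⁻¹ q q') ≤ 2 * Qn / c ^ 2 * δ / (w q * w q')) := by
  have hdiag' : ∀ q (z : EuclideanSpace ℝ (Fin (m q))),
      c * w q ^ 2 * ‖z‖ ^ 2 ≤ ⟪z, blockOp M q q z⟫ := fun q z => by
    simpa [EuclideanSpace.real_norm_sq_eq, EuclideanSpace.inner_eq_star_dotProduct,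
      blockOp_apply, dotProduct_comm] using hdiag q (ofLp z)
  have hsol (y : EuclideanSpace ℝ (Fin (m q'))) (r : Fin Qn) :
      ∑ t, blockOp M r t (blockOp M⁻¹ t q' y)
        = Pi.single (M := fun r => EuclideanSpace ℝ (Fin (m r))) q' y r := by
    rw [sum_blockOp_apply_blockOp_apply, mul_nonsing_inv _ hM, blockOp_one_apply]
  have hbound (y : EuclideanSpace ℝ (Fin (m q'))) :=
    norm_le_of_sum_apply_eq_single (blockOp M) hw hδ (by simpa using hsmall) hdiag'
      (fun q q' hne => (norm_blockOp M q q').trans_le (hoff q q' hne)) (hsol y)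
  have hw' : 0 < w q * w q' := mul_pos (hw q) (hw q')
  simp only [← norm_blockOp]
  constructor
  · refine ((blockOp M⁻¹ q q').opNorm_le_div_of_mul_norm_apply_le (a := c / 2 * (w q * w q'))
      (b := 1) (by positivity) zero_le_one fun y => by simpa using (hbound y).1 q).trans_eq ?_
    field_simp
  · intro hne
    refine ((blockOp M⁻¹ q q').opNorm_le_div_of_mul_norm_apply_le
      (a := c * (c / 2) * (w q * w q')) (b := Qn * δ) (by positivity) (by positivity)
      fun y => by simpa using (hbound y).2 q hne).trans_eq ?_
    field_simp

end BlockMatrix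

lemma exists_pos_forall_le_of_finite {ι : Type*} [Finite ι] {c : ι → ℝ} (hc : ∀ i, 0 < c i) :
    ∃ c₀, 0 < c₀ ∧ ∀ i, c₀ ≤ c i := by
  cases isEmpty_or_nonempty ι
  · exact ⟨1, one_pos, fun i => isEmptyElim i⟩
  · obtain ⟨i₀, hi₀⟩ := Finite.exists_min c
    exact ⟨c i₀, hc i₀, hi₀⟩

theorem block_inverse_bounds_general
    (Qn : ℕ) (m : Fin Qn → ℕ)
    (c C : Fin Qn → ℝ) (hc : ∀ q, 0 < c q) :
    ∃ δ0 : ℝ, 0 < δ0 ∧ ∃ K : ℝ, 0 < K ∧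
      ∀ (s : Fin Qn → ℝ), (∀ q, 0 < s q) →
      ∀ δ : ℝ, 0 < δ → δ ≤ δ0 →
      ∀ D : Matrix ((q : Fin Qn) × Fin (m q)) ((q : Fin Qn) × Fin (m q)) ℝ,
        D.IsSymm → IsUnit D.det →
        (∀ q, ∀ v : Fin (m q) → ℝ,
          c q * s q * (∑ i, v i ^ 2)
            ≤ dotProduct v (Matrix.mulVec (blk D q q) v)) →
        (∀ q, ∀ v : Fin (m q) → ℝ,
          dotProduct v (Matrix.mulVec (blk D q q) v)
            ≤ C q * s q * (∑ i, v i ^ 2)) →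
        (∀ q q', q ≠ q' →
          matOpNorm (blk D q q') ≤ δ * Real.sqrt (s q * s q')) →
        (∀ q, matOpNorm (blk D⁻¹ q q) ≤ K / s q) ∧
        (∀ q q', q ≠ q' →
          matOpNorm (blk D⁻¹ q q') ≤ K * δ / Real.sqrt (s q * s q')) := by
  obtain ⟨c₀, hc₀, hc₀le⟩ := exists_pos_forall_le_of_finite hc
  refine ⟨c₀ / (2 * (Qn + 1)), by positivity, 2 / c₀ + 2 * Qn / c₀ ^ 2, by positivity,
    fun s hs δ hδ hδ₀ D _ hD hlow _ hoff => ?_⟩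
  have hsmall : δ * Qn ≤ c₀ / 2 :=
    calc δ * Qn ≤ c₀ / (2 * (Qn + 1)) * (Qn + 1) := by gcongr; linarith
      _ = c₀ / 2 := by field_simp
  have hdiag (q : Fin Qn) (v : Fin (m q) → ℝ) :
      c₀ * √(s q) ^ 2 * ∑ i, v i ^ 2 ≤ v ⬝ᵥ blk D q q *ᵥ v := by
    rw [Real.sq_sqrt (hs q).le]
    have := mul_le_mul_of_nonneg_right (hc₀le q) (hs q).le
    exact le_trans (mul_le_mul_of_nonneg_right this (by positivity)) (hlow q v)
  have hoff' (q q' : Fin Qn) (hne : q ≠ q') :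
      matOpNorm (blk D q q') ≤ δ * (√(s q) * √(s q')) := by
    rw [← Real.sqrt_mul (hs q).le]
    exact hoff q q' hne
  have hB :=
    matOpNorm_blk_inv_le D hc₀ (fun q => Real.sqrt_pos.2 (hs q)) hδ.le hsmall hD hdiag hoff'
  refine ⟨fun q => (hB q q).1.trans ?_, fun q q' hne => ((hB q q').2 hne).trans ?_⟩
  · rw [Real.mul_self_sqrt (hs q).le]
    exact div_le_div_of_nonneg_right (le_add_of_nonneg_right (by positivity)) (hs q).le
  · rw [← Real.sqrt_mul (hs q).le]
    exact div_le_div_of_nonneg_right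
      (mul_le_mul_of_nonneg_right (le_add_of_nonneg_left (by positivity)) hδ.le)
      (Real.sqrt_nonneg _)

/-- Block-matrix inversion bounds: if `D` is an invertible symmetric `Q×Q` block matrix
whose diagonal blocks satisfy `c_q s_q ≤ λ_min(D^{qq}) ≤ λ_max(D^{qq}) ≤ C_q s_q` and
whose off-diagonal blocks satisfy `σ_max(D^{qq'}) ≤ δ √(s_q s_{q'})` for sufficiently
small `δ`, then `B = D⁻¹` satisfies `‖B^{qq}‖_op = O(1/s_q)` and
`‖B^{qq'}‖_op = O(δ/√(s_q s_{q'}))` for `q ≠ q'`, with constants depending only on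
`Q`, `c`, `C`. -/
theorem block_inverse_bounds
    (Qn : ℕ) (m : Fin Qn → ℕ)
    (c C : Fin Qn → ℝ) (hc : ∀ q, 0 < c q) (hC : ∀ q, 0 < C q) :
    ∃ δ0 : ℝ, 0 < δ0 ∧ ∃ K : ℝ, 0 < K ∧
      ∀ (s : Fin Qn → ℝ), (∀ q, 0 < s q) →
      ∀ δ : ℝ, 0 < δ → δ ≤ δ0 →
      ∀ D : Matrix ((q : Fin Qn) × Fin (m q)) ((q : Fin Qn) × Fin (m q)) ℝ,
        D.IsSymm → IsUnit D.det →
        (∀ q, ∀ v : Fin (m q) → ℝ,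
          c q * s q * (∑ i, v i ^ 2)
            ≤ dotProduct v (Matrix.mulVec (blk D q q) v)) →
        (∀ q, ∀ v : Fin (m q) → ℝ,
          dotProduct v (Matrix.mulVec (blk D q q) v)
            ≤ C q * s q * (∑ i, v i ^ 2)) →
        (∀ q q', q ≠ q' →
          matOpNorm (blk D q q') ≤ δ * Real.sqrt (s q * s q')) →
        (∀ q, matOpNorm (blk D⁻¹ q q) ≤ K / s q) ∧
        (∀ q q', q ≠ q' →
          matOpNorm (blk D⁻¹ q q') ≤ K * δ / Real.sqrt (s q * s q')) :=
  block_inverse_bounds_general Qn m c C hc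
end
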